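/- Let v, w belong to the 4-dimensional Minkowski space (ℝ^{1,3}, ⟨·,·⟩) of signature (+,−,−,−), with v future-directed timelike (⟨v,v⟩ > 0, ⟨v,e_0⟩ > 0) and w spacelike nonzero (⟨w,w⟩ < 0). Let U = {u : ⟨u,u⟩ ≥ 1, ⟨u,e_0⟩ > 0}. Then the range of u ↦ ⟨v,u⟩ on U is [√⟨v,v⟩, +∞) and the range of u ↦ ⟨w,u⟩ on U is all of ℝ. -/

import Mathlib

/-!
Split a vector of `ℝ⁴` into its time coordinate and its spatial part in Euclidean `ℝ³`, so that
`⟨x, y⟩ = x₀ y₀ - (x⃗ · y⃗)`. For `u ∈ U`, Cauchy–Schwarz on the spatial parts and the identity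
`(ac - bd)² - (a² - b²)(c² - d²) = (ad - bc)²` give the reversed Cauchy–Schwarz inequality
`√⟨v,v⟩ ≤ √⟨v,v⟩ √⟨u,u⟩ ≤ ⟨v,u⟩`, and the bound is attained along the ray through `v`.
For spacelike `w`, the vector `u = (a, t w⃗)` with `t` chosen so that `⟨w,u⟩ = c` satisfies
`⟨u,u⟩ ≥ 1` as soon as `a` is large, because `⟨u,u⟩ - 1` is then a quadratic in `a` with
leading coefficient `-⟨w,w⟩ / |w⃗|² > 0`.
-/

open Real

/-- Minkowski pseudoscalar product of signature (+,−,−,−) on ℝ⁴. -/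
def mink (x y : Fin 4 → ℝ) : ℝ :=
  x 0 * y 0 - x 1 * y 1 - x 2 * y 2 - x 3 * y 3

lemma sqrt_sq_sub_sq_mul_le {a b c d : ℝ} (hab : |b| ≤ a) (hcd : |d| ≤ c) :
    √(a ^ 2 - b ^ 2) * √(c ^ 2 - d ^ 2) ≤ a * c - b * d := by
  have hb : b ^ 2 ≤ a ^ 2 := sq_le_sq' (abs_le.mp hab).1 (abs_le.mp hab).2
  rw [← sqrt_mul (by linarith), sqrt_le_iff]
  constructor
  · have hbd : |b| * |d| ≤ a * c := mul_le_mul hab hcd (abs_nonneg d) ((abs_nonneg b).trans hab)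
    linarith [abs_mul b d ▸ le_abs_self (b * d)]
  · nlinarith [sq_nonneg (a * d - b * c)]

lemma exists_one_le_quadratic_nonneg {p : ℝ} (hp : 0 < p) (q r : ℝ) :
    ∃ a : ℝ, 1 ≤ a ∧ 0 ≤ p * a ^ 2 + q * a + r := by
  set a := 1 + (|q| + |r|) / p
  have hpa : p + |q| + |r| ≤ p * a := by
    simp only [a, mul_add, mul_div_cancel₀ _ hp.ne']; linarith
  have ha : 1 ≤ a := le_add_of_nonneg_right (by positivity)
  refine ⟨a, ha, ?_⟩
  nlinarith [neg_abs_le q, neg_abs_le r, abs_nonneg q, abs_nonneg r]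

def spatial (x : Fin 4 → ℝ) : EuclideanSpace ℝ (Fin 3) :=
  WithLp.toLp 2 fun i => x i.succ

def event (a : ℝ) (p : EuclideanSpace ℝ (Fin 3)) : Fin 4 → ℝ :=
  Fin.cons a p

@[simp] lemma event_zero (a : ℝ) (p : EuclideanSpace ℝ (Fin 3)) : event a p 0 = a :=
  Fin.cons_zero _ _

@[simp] lemma spatial_event (a : ℝ) (p : EuclideanSpace ℝ (Fin 3)) : spatial (event a p) = p := by
  ext i
  simp [spatial, event]

lemma mink_eq_sub_inner (x y : Fin 4 → ℝ) :
    mink x y = x 0 * y 0 - inner ℝ (spatial x) (spatial y) := by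
  simp [mink, spatial, PiLp.inner_apply, Fin.sum_univ_three]
  ring

lemma mink_self (x : Fin 4 → ℝ) : mink x x = x 0 ^ 2 - ‖spatial x‖ ^ 2 := by
  rw [mink_eq_sub_inner, real_inner_self_eq_norm_sq]
  ring

lemma mink_smul_right (t : ℝ) (x y : Fin 4 → ℝ) : mink x (t • y) = t * mink x y := by
  simp only [mink, Pi.smul_apply, smul_eq_mul]
  ring

lemma mink_smul_left (t : ℝ) (x y : Fin 4 → ℝ) : mink (t • x) y = t * mink x y := by
  simp only [mink, Pi.smul_apply, smul_eq_mul]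
  ring

lemma norm_spatial_le_of_timelike {x : Fin 4 → ℝ} (hx : 0 < mink x x) (hx0 : 0 < x 0) :
    ‖spatial x‖ ≤ x 0 := by
  rw [mink_self] at hx
  nlinarith [norm_nonneg (spatial x)]

lemma sqrt_mink_self_mul_le_mink {x y : Fin 4 → ℝ} (hx : ‖spatial x‖ ≤ x 0)
    (hy : ‖spatial y‖ ≤ y 0) : √(mink x x) * √(mink y y) ≤ mink x y := by
  rw [mink_self, mink_self, mink_eq_sub_inner]
  calc √(x 0 ^ 2 - ‖spatial x‖ ^ 2) * √(y 0 ^ 2 - ‖spatial y‖ ^ 2)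
      ≤ x 0 * y 0 - ‖spatial x‖ * ‖spatial y‖ := by
        apply sqrt_sq_sub_sq_mul_le <;> rwa [abs_norm]
    _ ≤ x 0 * y 0 - inner ℝ (spatial x) (spatial y) := by
        linarith [real_inner_le_norm (spatial x) (spatial y)]

lemma image_mink_timelike {v : Fin 4 → ℝ} (hv : 0 < mink v v) (hv0 : 0 < v 0) :
    (fun u => mink v u) '' {u | 1 ≤ mink u u ∧ 0 < u 0} = Set.Ici √(mink v v) := by
  apply Set.Subset.antisymm
  · rintro _ ⟨u, ⟨hu, hu0⟩, rfl⟩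
    have hu_le : ‖spatial u‖ ≤ u 0 := norm_spatial_le_of_timelike (one_pos.trans_le hu) hu0
    calc √(mink v v) ≤ √(mink v v) * √(mink u u) :=
          le_mul_of_one_le_right (sqrt_nonneg _) (one_le_sqrt.mpr hu)
      _ ≤ mink v u := sqrt_mink_self_mul_le_mink (norm_spatial_le_of_timelike hv hv0) hu_le
  · intro c hc
    have hc0 : 0 < c := (sqrt_pos.mpr hv).trans_le hc
    have hc2 : mink v v ≤ c ^ 2 := by
      simpa [sq_sqrt hv.le] using pow_le_pow_left₀ (sqrt_nonneg _) hc 2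
    refine ⟨(c / mink v v) • v, ⟨?_, ?_⟩, ?_⟩
    · have hnorm : mink ((c / mink v v) • v) ((c / mink v v) • v) = c ^ 2 / mink v v := by
        rw [mink_smul_left, mink_smul_right]
        field_simp
      rwa [hnorm, one_le_div hv]
    · exact mul_pos (div_pos hc0 hv) hv0
    · simp only [mink_smul_right, div_mul_cancel₀ _ hv.ne']

lemma image_mink_spacelike {w : Fin 4 → ℝ} (hw : mink w w < 0) :
    (fun u => mink w u) '' {u | 1 ≤ mink u u ∧ 0 < u 0} = Set.univ := by
  refine Set.eq_univ_of_forall fun c => ?_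
  set m := ‖spatial w‖ ^ 2
  have hww : mink w w = w 0 ^ 2 - m := mink_self w
  have hm : 0 < m := by nlinarith [sq_nonneg (w 0)]
  obtain ⟨a, ha, hquad⟩ :=
    exists_one_le_quadratic_nonneg (p := m - w 0 ^ 2) (by linarith) (2 * w 0 * c) (-(c ^ 2 + m))
  set t := (w 0 * a - c) / m
  have htm : t * m = w 0 * a - c := div_mul_cancel₀ _ hm.ne'
  refine ⟨event a (t • spatial w), ⟨?_, by simpa using one_pos.trans_le ha⟩, ?_⟩
  · rw [mink_self, event_zero, spatial_event, norm_smul, mul_pow, norm_eq_abs, sq_abs]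
    have : t ^ 2 * m * m = (w 0 * a - c) ^ 2 := by rw [← htm]; ring
    nlinarith
  · simp only [mink_eq_sub_inner, event_zero, spatial_event, inner_smul_right,
      real_inner_self_eq_norm_sq]
    linarith

theorem stmt14 (v w : Fin 4 → ℝ)
    (hv : 0 < mink v v) (hv0 : 0 < v 0) (hw : mink w w < 0) :
    ((fun u => mink v u) '' {u | 1 ≤ mink u u ∧ 0 < u 0} =
      Set.Ici (Real.sqrt (mink v v))) ∧
    ((fun u => mink w u) '' {u | 1 ≤ mink u u ∧ 0 < u 0} = Set.univ) :=
  ⟨image_mink_timelike hv hv0, image_mink_spacelike hw⟩
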